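/- Let $k \ge 2$ and $p = 2k$. There exist $\overline{\mu}_1 > \overline{\mu}_2 > \cdots > \overline{\mu}_k > 0$ and $\varepsilon_0 > 0$ such that for every $j \in \mathbb{N}$ and every point $(\mu_1, \dots, \mu_k, \nu) \in \mathbb{R}^{k+1}$ with $\max\{|\mu_1 - \overline{\mu}_1|, \dots, |\mu_k - \overline{\mu}_k|, |\nu|\} < \varepsilon_0\, j^{2-p}$, the derivative (Jacobian matrix) of $F^{(j)} = (F^{(j)}_1, \dots, F^{(j)}_k) : \mathbb{R}^{k+1} \to \mathbb{R}^k$ at $(\mu_1, \dots, \mu_k, \nu)$ has rank $k$. -/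

import Mathlib

open Finset

/-- `Ccoef m α = C_{m,α} = ∑_{n₁+⋯+n_α = m, nᵢ ≥ 1} (2m)! / ((2n₁)! ⋯ (2n_α)!)`. -/
def Ccoef (m α : ℕ) : ℕ :=
  ∑ c ∈ (Finset.Nat.antidiagonalTuple α m).filter (fun c => ∀ i, 1 ≤ c i),
    Nat.multinomial Finset.univ (fun i => 2 * c i)

/-- The polynomial `H_m(μ₁, …, μ_k) = ∑_{α=1}^m ∑_{S ⊆ {1,…,k}, |S| = α} C_{m,α} ∏_{i∈S} μᵢ`,
with the convention `H₀ = 1`. -/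
def Hpoly (k m : ℕ) (μ : Fin k → ℝ) : ℝ :=
  ∑ α ∈ Finset.range (m + 1), ∑ S ∈ Finset.univ.powersetCard α,
    (Ccoef m α : ℝ) * ∏ i ∈ S, μ i

/-- `F^{(j)}_m(μ₁,…,μ_k, ν) = H_m(μ) + ν ∑_{l=1}^m (2m choose 2l) j^{2l} H_{m-l}(μ)`. -/
def Fpoly (k j m : ℕ) (μ : Fin k → ℝ) (ν : ℝ) : ℝ :=
  Hpoly k m μ +
    ν * ∑ l ∈ Finset.Icc 1 m, ((2 * m).choose (2 * l) : ℝ) * (j : ℝ) ^ (2 * l) *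
      Hpoly k (m - l) μ

/-- The map `F^{(j)} : ℝ^{k+1} → ℝ^k` with components `F^{(j)}_m`, `m = 1, …, k`. -/
def Fmap (k j : ℕ) : (Fin k → ℝ) × ℝ → (Fin k → ℝ) :=
  fun z m => Fpoly k j (m.1 + 1) z.1 z.2

/-!
The `μ`-part of the Jacobian of `F^{(j)}` at `(μ, ν)` is a matrix `J(μ, w)` depending
polynomially on `μ` and on `w_l = ν j^{2l}`, `1 ≤ l ≤ k - 1`. Since
`∂H_m/∂μ_i = ∑_β C_{m,β+1} e_β(μ without μ_i)` and `C_{m,α} = 0` for `α > m`, at `w = 0` it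
factors as the lower triangular matrix `(C_{m,β})` with diagonal `C_{m,m} > 0` times
`E = (e_β(μ without μ_i))_{β,i}`. By Vieta, `∑_β (-1)^β e_β(μ without μ_i) x^{k-1-β}` is
`∏_{t ≠ i} (x - μ_t)`, so `E` times a Vandermonde matrix is diagonal, with nonzero entries when
the `μ_i` are distinct. Hence `det J ≠ 0` on an `ε₀`-ball around `(μ̄, 0)`, and on the ball of
radius `ε₀ j^{2-2k}` every `|ν j^{2l}|` with `l ≤ k - 1` stays below `ε₀`.
-/

theorem HasFDerivAt.surjective_of_surjective_left {𝕜 E F G : Type*} [NontriviallyNormedField 𝕜]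
    [NormedAddCommGroup E] [NormedSpace 𝕜 E] [NormedAddCommGroup F] [NormedSpace 𝕜 F]
    [NormedAddCommGroup G] [NormedSpace 𝕜 G] {f : E × F → G} {D : E × F →L[𝕜] G}
    {A : E →L[𝕜] G} {x : E} {y : F} (hD : HasFDerivAt f D (x, y))
    (hA : HasFDerivAt (fun x => f (x, y)) A x) (hsurj : Function.Surjective A) :
    Function.Surjective D := by
  have hDA : D.comp (ContinuousLinearMap.inl 𝕜 E F) = A :=
    (hD.comp x (hasFDerivAt_prodMk_left x y)).unique hA
  intro z
  obtain ⟨a, rfl⟩ := hsurj z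
  exact ⟨(a, 0), by rw [← hDA]; rfl⟩

lemma Fin.sum_filter_val_mem {M : Type*} [AddCommMonoid M] {k : ℕ} {S : Finset ℕ}
    (hS : S ⊆ range k) (f : ℕ → M) : ∑ l : Fin k with l.val ∈ S, f l = ∑ l ∈ S, f l := by
  rw [sum_filter, Fin.sum_univ_eq_sum_range (fun l => if l ∈ S then f l else 0), ← sum_filter,
    filter_mem_eq_inter, inter_eq_right.2 hS]

lemma abs_mul_pow_lt {x a ε : ℝ} {e : ℤ} {n : ℕ} (hx : 1 ≤ x) (hn : (n : ℤ) + e ≤ 0)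
    (ha : |a| < ε * x ^ e) : |a * x ^ n| < ε := by
  have hx0 : 0 < x := one_pos.trans_le hx
  have hε : 0 < ε := pos_of_mul_pos_left ((abs_nonneg a).trans_lt ha) (zpow_pos hx0 e).le
  calc |a * x ^ n| = |a| * x ^ n := by rw [abs_mul, abs_of_pos (pow_pos hx0 n)]
    _ < ε * x ^ e * x ^ n := mul_lt_mul_of_pos_right ha (pow_pos hx0 n)
    _ = ε * x ^ ((n : ℤ) + e) := by rw [zpow_add₀ hx0.ne', zpow_natCast]; ring
    _ ≤ ε := mul_le_of_le_one_right hε.le (zpow_le_one_of_nonpos₀ hx hn)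

section esymmErase

variable {ι R : Type*} [Fintype ι] [DecidableEq ι] [CommRing R]

def esymmErase (μ : ι → R) (i : ι) (β : ℕ) : R :=
  ((univ.erase i).val.map μ).esymm β

lemma esymmErase_eq_sum (μ : ι → R) (i : ι) (β : ℕ) :
    esymmErase μ i β = ∑ T ∈ (univ.erase i).powersetCard β, ∏ t ∈ T, μ t :=
  Finset.esymm_map_val μ _ β

lemma sum_powersetCard_succ_filter_mem (μ : ι → R) (i : ι) (β : ℕ) :
    ∑ S ∈ univ.powersetCard (β + 1) with i ∈ S, ∏ t ∈ S.erase i, μ t = esymmErase μ i β := by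
  rw [esymmErase_eq_sum]
  refine sum_nbij' (·.erase i) (insert i) (fun S hS => ?_) (fun T hT => ?_)
    (fun S hS => insert_erase (mem_filter.1 hS).2) (fun T hT => ?_) (fun _ _ => rfl)
  · simp only [mem_filter, mem_powersetCard] at hS ⊢
    refine ⟨erase_subset_erase i hS.1.1, ?_⟩
    rw [card_erase_of_mem hS.2, hS.1.2, Nat.add_sub_cancel]
  · simp only [mem_filter, mem_powersetCard] at hT ⊢
    have hiT : i ∉ T := fun h => (mem_erase.1 (hT.1 h)).1 rfl
    exact ⟨⟨subset_univ _, by rw [card_insert_of_notMem hiT, hT.2]⟩, mem_insert_self i T⟩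
  · simp only [mem_powersetCard] at hT
    exact erase_insert fun h => (mem_erase.1 (hT.1 h)).1 rfl

lemma prod_erase_sub_eq_sum_esymmErase (μ : ι → R) (i : ι) (x : R) :
    ∏ t ∈ univ.erase i, (x - μ t) = ∑ β ∈ range (Fintype.card ι),
      (-1) ^ β * esymmErase μ i β * x ^ (Fintype.card ι - 1 - β) := by
  have h := congrArg (Polynomial.eval x)
    (Multiset.prod_X_sub_X_eq_sum_esymm ((univ.erase i).val.map μ))
  simp only [Multiset.map_map, Function.comp_def, Polynomial.eval_multiset_prod,
    Polynomial.eval_sub, Polynomial.eval_X, Polynomial.eval_C,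
    Polynomial.eval_finsetSum, Polynomial.eval_mul, Polynomial.eval_pow,
    Polynomial.eval_neg, Polynomial.eval_one, Multiset.card_map] at h
  have hcard : Multiset.card (univ.erase i).val = Fintype.card ι - 1 := by simp
  rw [hcard, Nat.sub_add_cancel (Fintype.card_pos_iff.2 ⟨i⟩)] at h
  rw [prod_eq_multiset_prod, h]
  exact sum_congr rfl fun β _ => by rw [esymmErase, mul_assoc]

end esymmErase

lemma det_esymmErase_ne_zero {R : Type*} [CommRing R] [IsDomain R] {k : ℕ} {μ : Fin k → R}
    (hμ : Function.Injective μ) :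
    (Matrix.of fun (β i : Fin k) => esymmErase μ i β).det ≠ 0 := by
  set M : Matrix (Fin k) (Fin k) R := Matrix.of fun β i => esymmErase μ i β
  set W : Matrix (Fin k) (Fin k) R := Matrix.of fun β r => μ r ^ (k - 1 - (β : ℕ))
  set d : Fin k → R := fun i => ∏ t ∈ univ.erase i, (μ i - μ t)
  have hMW : M.transpose * Matrix.diagonal (fun β : Fin k => (-1) ^ (β : ℕ)) * W =
      Matrix.diagonal d := by
    ext i r
    have hvieta := prod_erase_sub_eq_sum_esymmErase μ i (μ r)
    rw [Fintype.card_fin, ← Fin.sum_univ_eq_sum_range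
      (fun β => (-1) ^ β * esymmErase μ i β * μ r ^ (k - 1 - β))] at hvieta
    rw [Matrix.mul_apply, Matrix.diagonal_apply]
    simp only [Matrix.mul_diagonal, Matrix.transpose_apply, M, W, Matrix.of_apply]
    have hsum : ∑ β : Fin k, esymmErase μ i β * (-1) ^ (β : ℕ) * μ r ^ (k - 1 - (β : ℕ)) =
        ∏ t ∈ univ.erase i, (μ r - μ t) := by
      rw [hvieta]
      exact sum_congr rfl fun β _ => by ring
    rw [hsum]
    split_ifs with hir
    · rw [hir]
    · exact prod_eq_zero (mem_erase.2 ⟨Ne.symm hir, mem_univ r⟩) (sub_self _)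
  have hd : (Matrix.diagonal d).det ≠ 0 := by
    rw [Matrix.det_diagonal]
    exact prod_ne_zero_iff.2 fun i _ => prod_ne_zero_iff.2 fun t ht =>
      sub_ne_zero.2 fun h => (mem_erase.1 ht).1 (hμ h).symm
  rw [← hMW, Matrix.det_mul, Matrix.det_mul, Matrix.det_transpose] at hd
  exact left_ne_zero_of_mul (left_ne_zero_of_mul hd)

lemma Ccoef_eq_zero_of_lt {m α : ℕ} (h : m < α) : Ccoef m α = 0 := by
  refine sum_eq_zero fun c hc => absurd ?_ h.not_ge
  rw [mem_filter, Nat.mem_antidiagonalTuple] at hc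
  calc α = ∑ _i : Fin α, 1 := by simp
    _ ≤ ∑ i, c i := sum_le_sum fun i _ => hc.2 i
    _ = m := hc.1

lemma Ccoef_self_pos (m : ℕ) : 0 < Ccoef m m :=
  sum_pos (fun _ _ => Nat.multinomial_pos _ _)
    ⟨fun _ => 1, mem_filter.2 ⟨Nat.mem_antidiagonalTuple.2 (by simp), fun _ => le_rfl⟩⟩

section derivative

variable (k : ℕ)

def dHpoly (m : ℕ) (μ : Fin k → ℝ) (i : Fin k) : ℝ :=
  ∑ β ∈ range m, (Ccoef m (β + 1) : ℝ) * esymmErase μ i β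

noncomputable def gradHpoly (m : ℕ) (μ : Fin k → ℝ) : (Fin k → ℝ) →L[ℝ] ℝ :=
  ∑ i, dHpoly k m μ i • ContinuousLinearMap.proj i

variable {k}

lemma gradHpoly_apply (m : ℕ) (μ v : Fin k → ℝ) :
    gradHpoly k m μ v = ∑ i, dHpoly k m μ i * v i := by
  simp [gradHpoly]

@[simp]
lemma gradHpoly_zero (μ : Fin k → ℝ) : gradHpoly k 0 μ = 0 := by
  simp [gradHpoly, dHpoly]

@[fun_prop]
lemma continuous_dHpoly (m : ℕ) (i : Fin k) : Continuous fun μ => dHpoly k m μ i := by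
  simp only [dHpoly, esymmErase_eq_sum]
  fun_prop

lemma hasFDerivAt_Hpoly (m : ℕ) (μ : Fin k → ℝ) :
    HasFDerivAt (Hpoly k m) (gradHpoly k m μ) μ := by
  refine (HasFDerivAt.fun_sum fun α _ => HasFDerivAt.fun_sum fun S _ =>
    (HasFDerivAt.finsetProd fun i _ => hasFDerivAt_apply i μ).const_mul
      (Ccoef m α : ℝ)).congr_fderiv ?_
  ext v
  simp only [_root_.sum_apply, smul_apply, ContinuousLinearMap.proj_apply, smul_eq_mul,
    gradHpoly_apply]
  rw [sum_range_succ', powersetCard_zero, sum_singleton, sum_empty, mul_zero, add_zero]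
  simp only [dHpoly, ← sum_powersetCard_succ_filter_mem, mul_sum, sum_mul]
  rw [sum_comm]
  refine sum_congr rfl fun β _ => ?_
  rw [sum_comm' (t' := univ) (s' := fun i => {S ∈ univ.powersetCard (β + 1) | i ∈ S})
    fun S i => by simp [and_comm]]
  simp only [mul_assoc]

lemma hasFDerivAt_Fpoly_left (j m : ℕ) (μ : Fin k → ℝ) (ν : ℝ) :
    HasFDerivAt (fun μ => Fpoly k j m μ ν) (gradHpoly k m μ + ν • ∑ l ∈ Icc 1 m,
      (((2 * m).choose (2 * l) : ℝ) * (j : ℝ) ^ (2 * l)) • gradHpoly k (m - l) μ) μ :=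
  (hasFDerivAt_Hpoly m μ).add <| (HasFDerivAt.fun_sum fun l _ =>
    (hasFDerivAt_Hpoly (m - l) μ).const_mul _).const_mul ν

end derivative

lemma differentiable_Fmap (k j : ℕ) : Differentiable ℝ (Fmap k j) := by
  unfold Fmap Fpoly Hpoly
  fun_prop

section jacobian

variable {k : ℕ}

/-- `w l` plays the role of `ν j^{2l}`; `w 0` is not used. -/
def jacobianBlock (μ w : Fin k → ℝ) : Matrix (Fin k) (Fin k) ℝ :=
  Matrix.of fun m i => dHpoly k ((m : ℕ) + 1) μ i +
    ∑ l : Fin k with l.val ∈ Icc 1 (m : ℕ),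
      ((2 * ((m : ℕ) + 1)).choose (2 * l) : ℝ) * w l * dHpoly k ((m : ℕ) + 1 - l) μ i

lemma jacobianBlock_apply (μ : Fin k → ℝ) (w : ℕ → ℝ) (m i : Fin k) :
    jacobianBlock μ (fun l => w l) m i = dHpoly k ((m : ℕ) + 1) μ i +
      ∑ l ∈ Icc 1 (m : ℕ), ((2 * ((m : ℕ) + 1)).choose (2 * l) : ℝ) * w l *
        dHpoly k ((m : ℕ) + 1 - l) μ i := by
  have hsub : Icc 1 (m : ℕ) ⊆ range k := fun l hl => by
    rw [mem_Icc] at hl; rw [mem_range]; omega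
  rw [jacobianBlock, Matrix.of_apply, Fin.sum_filter_val_mem hsub
    fun l => ((2 * ((m : ℕ) + 1)).choose (2 * l) : ℝ) * w l * dHpoly k ((m : ℕ) + 1 - l) μ i]

lemma hasFDerivAt_Fmap_left (j : ℕ) (μ : Fin k → ℝ) (ν : ℝ) :
    HasFDerivAt (fun μ => Fmap k j (μ, ν)) (LinearMap.toContinuousLinearMap <|
      Matrix.toLin' (jacobianBlock μ fun l => ν * (j : ℝ) ^ (2 * (l : ℕ)))) μ := by
  refine hasFDerivAt_pi'' fun m => (hasFDerivAt_Fpoly_left j _ μ ν).congr_fderiv ?_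
  ext v
  simp only [sum_Icc_succ_top (Nat.le_add_left 1 m), Nat.sub_self, gradHpoly_zero, smul_zero,
    add_zero, add_apply, smul_apply, _root_.sum_apply, gradHpoly_apply,
    smul_eq_mul, ContinuousLinearMap.coe_comp, Function.comp_apply,
    ContinuousLinearMap.proj_apply, LinearMap.coe_toContinuousLinearMap', Matrix.toLin'_apply,
    Matrix.mulVec, dotProduct, jacobianBlock_apply μ fun l => ν * (j : ℝ) ^ (2 * l)]
  simp only [add_mul, sum_add_distrib, mul_sum, sum_mul]
  rw [sum_comm (s := univ)]
  congr 1
  exact sum_congr rfl fun l _ => sum_congr rfl fun i _ => by ring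

lemma continuous_det_jacobianBlock :
    Continuous fun z : (Fin k → ℝ) × (Fin k → ℝ) => (jacobianBlock z.1 z.2).det := by
  refine Continuous.matrix_det <| continuous_matrix fun m i => ?_
  simp only [jacobianBlock, Matrix.of_apply]
  fun_prop

lemma jacobianBlock_zero (μ : Fin k → ℝ) :
    jacobianBlock μ 0 =
      (Matrix.of fun m β : Fin k => (Ccoef ((m : ℕ) + 1) ((β : ℕ) + 1) : ℝ)) *
        Matrix.of fun β i : Fin k => esymmErase μ i β := by
  ext m i
  have hsub : range ((m : ℕ) + 1) ⊆ range k := range_subset_range.2 m.isLt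
  simp only [jacobianBlock, Matrix.mul_apply, Matrix.of_apply, Pi.zero_apply, mul_zero, zero_mul,
    sum_const_zero, add_zero, dHpoly]
  rw [Fin.sum_univ_eq_sum_range
    (fun β => (Ccoef ((m : ℕ) + 1) (β + 1) : ℝ) * esymmErase μ i β)]
  exact sum_subset hsub fun β _ hβ => by
    rw [Ccoef_eq_zero_of_lt (by simpa using hβ), Nat.cast_zero, zero_mul]

lemma det_jacobianBlock_zero_ne_zero {μ : Fin k → ℝ} (hμ : Function.Injective μ) :
    (jacobianBlock μ 0).det ≠ 0 := by
  rw [jacobianBlock_zero, Matrix.det_mul, Matrix.det_of_isLowerTriangular _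
    fun m β (h : m < β) => by simp [Ccoef_eq_zero_of_lt (Nat.succ_lt_succ h)]]
  exact mul_ne_zero (prod_ne_zero_iff.2 fun m _ => by simpa using (Ccoef_self_pos _).ne')
    (det_esymmErase_ne_zero hμ)

end jacobian

def mubar (k : ℕ) (i : Fin k) : ℝ := k - i

lemma mubar_strictAnti (k : ℕ) : StrictAnti (mubar k) := fun i i' h => by
  simp only [mubar]
  gcongr
  exact_mod_cast h

lemma mubar_pos (k : ℕ) (i : Fin k) : 0 < mubar k i := by
  simp only [mubar, sub_pos]
  exact_mod_cast i.isLt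

theorem rank_Fmap_on_ball_general (k : ℕ) :
    ∃ (μbar : Fin k → ℝ) (ε₀ : ℝ),
      (∀ i i' : Fin k, i < i' → μbar i' < μbar i) ∧ (∀ i, 0 < μbar i) ∧ 0 < ε₀ ∧
      ∀ j : ℕ, 1 ≤ j → ∀ (μ : Fin k → ℝ) (ν : ℝ),
        (∀ i, |μ i - μbar i| < ε₀ * (j : ℝ) ^ ((2 : ℤ) - 2 * (k : ℤ))) →
        |ν| < ε₀ * (j : ℝ) ^ ((2 : ℤ) - 2 * (k : ℤ)) →
        ∃ D : ((Fin k → ℝ) × ℝ) →L[ℝ] (Fin k → ℝ),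
          HasFDerivAt (Fmap k j) D (μ, ν) ∧ Function.Surjective D := by
  obtain ⟨ε, hε, hball⟩ := Metric.isOpen_iff.1
    (isOpen_ne_fun continuous_det_jacobianBlock continuous_const) (mubar k, 0)
    (det_jacobianBlock_zero_ne_zero (mubar_strictAnti k).injective)
  refine ⟨mubar k, ε, fun i i' h => mubar_strictAnti k h, mubar_pos k, hε,
    fun j hj μ ν hμ hν => ?_⟩
  have hj : (1 : ℝ) ≤ j := by exact_mod_cast hj
  have hnear : (μ, fun l : Fin k => ν * (j : ℝ) ^ (2 * (l : ℕ))) ∈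
      Metric.ball (mubar k, 0) ε := by
    rw [Metric.mem_ball, Prod.dist_eq, max_lt_iff, dist_pi_lt_iff hε, dist_pi_lt_iff hε]
    refine ⟨fun i => ?_, fun l => ?_⟩
    · simpa [Real.dist_eq] using abs_mul_pow_lt (n := 0) hj (by have := i.isLt; omega) (hμ i)
    · simpa [Real.dist_eq] using abs_mul_pow_lt (n := 2 * l) hj (by push_cast; omega) hν
  have hsurj := Matrix.mulVec_surjective_iff_isUnit.2
    ((Matrix.isUnit_iff_isUnit_det _).2 (isUnit_iff_ne_zero.2 (hball hnear)))
  exact ⟨_, (differentiable_Fmap k j _).hasFDerivAt,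
    (differentiable_Fmap k j _).hasFDerivAt.surjective_of_surjective_left
      (hasFDerivAt_Fmap_left j μ ν) hsurj⟩

/-- **Lemma `nbhd`.** For `p = 2k` even, `k ≥ 2`, there exist `μ̄₁ > ⋯ > μ̄_k > 0` and
`ε₀ > 0` such that for every `j` the derivative of `F^{(j)}` has rank `k` (is surjective)
at every point of the `ℓ∞`-ball with center `(μ̄₁, …, μ̄_k, 0)` and radius `ε₀ j^{2-p}`. -/
theorem rank_Fmap_on_ball (k : ℕ) (hk : 2 ≤ k) :
    ∃ (μbar : Fin k → ℝ) (ε₀ : ℝ),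
      (∀ i i' : Fin k, i < i' → μbar i' < μbar i) ∧ (∀ i, 0 < μbar i) ∧ 0 < ε₀ ∧
      ∀ j : ℕ, 1 ≤ j → ∀ (μ : Fin k → ℝ) (ν : ℝ),
        (∀ i, |μ i - μbar i| < ε₀ * (j : ℝ) ^ ((2 : ℤ) - 2 * (k : ℤ))) →
        |ν| < ε₀ * (j : ℝ) ^ ((2 : ℤ) - 2 * (k : ℤ)) →
        ∃ D : ((Fin k → ℝ) × ℝ) →L[ℝ] (Fin k → ℝ),
          HasFDerivAt (Fmap k j) D (μ, ν) ∧ Function.Surjective D :=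
  rank_Fmap_on_ball_general k
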